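/- arXiv:2011.09729 — 5 statements merged into one kernel-verified Lean document; each statement's English description precedes it below -/
import Mathlib

section
/- Let G be a connected simple graph on vertex set [n+1] with n ≥ 1, and for each vertex i let k_i(G) denote the number of connected induced subgraphs of G containing i. If k_{n+1}(G) ≤ k_i(G) for all i ∈ [n+1], then the induced subgraph G|_{[n]} on [n] = [n+1] \ {n+1} is connected. -/
/-!
Suppose `v` is a cut vertex of the connected graph `G`, and let `u`, `w` be neighbours of `v` in
different components of `G - v`. A connected set containing `u` but not `v` lies in the component
of `u`, so adding `v` to it gives a connected set containing `v` but not `w`; this injection misses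
`{v}`, whence `#{I ∋ u, I ∌ v} < #{I ∋ v, I ∌ w}`, and symmetrically with `u`, `w` swapped. Since
`k_u = #{I ∋ u, v} + #{I ∋ u, I ∌ v}` and `k_v = #{I ∋ u, v} + #{I ∋ v, I ∌ u}`, adding the two
inequalities gives `k_u + k_w < 2 k_v`, so `v` cannot minimize `k`.
-/

open scoped Classical

/-- The graphical building set of connected induced subgraphs. -/
noncomputable def graphBuildingSet {m : ℕ} (G : SimpleGraph (Fin m)) :
    Finset (Finset (Fin m)) :=
  Finset.univ.filter fun I => (G.induce (I : Set (Fin m))).Connected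

/-- `k_i(G)`: the number of connected induced subgraphs of `G` containing `i`. -/
noncomputable def kOf {m : ℕ} (G : SimpleGraph (Fin m)) (i : Fin m) : ℕ :=
  ((graphBuildingSet G).filter fun I => i ∈ I).card

namespace SimpleGraph

variable {V : Type*} {G : SimpleGraph V}

lemma Preconnected.reachable_induce_of_subset {s t : Set V} (h : (G.induce s).Preconnected)
    (hst : s ⊆ t) {a b : V} (ha : a ∈ s) (hb : b ∈ s) :
    (G.induce t).Reachable ⟨a, hst ha⟩ ⟨b, hst hb⟩ :=
  (h ⟨a, ha⟩ ⟨b, hb⟩).map (G.induceHomOfLE hst).toHom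

lemma Connected.exists_adj_reachable_induce_compl (hG : G.Connected) {v : V}
    (x : ({v}ᶜ : Set V)) :
    ∃ u : ({v}ᶜ : Set V), G.Adj u v ∧ (G.induce {v}ᶜ).Reachable x u := by
  let S : Set V := {w | ∃ hw : w ≠ v, (G.induce {v}ᶜ).Reachable x ⟨w, hw⟩}
  obtain ⟨p⟩ := hG.preconnected x v
  -- a walk from `x` to `v` leaves the component `S` of `x` in `G - v` only through `v`
  obtain ⟨d, -, ⟨hfst, hxd⟩, hsnd⟩ :=
    p.exists_boundary_dart S ⟨x.2, .rfl⟩ fun ⟨hvv, _⟩ => hvv rfl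
  by_cases hdv : d.snd = v
  · exact ⟨⟨d.fst, hfst⟩, hdv ▸ d.adj, hxd⟩
  · have hstep : (G.induce {v}ᶜ).Adj ⟨d.fst, hfst⟩ ⟨d.snd, hdv⟩ := d.adj
    exact absurd ⟨hdv, hxd.trans hstep.reachable⟩ hsnd

lemma Connected.exists_adj_adj_separated (hG : G.Connected) {v : V}
    (hv : ¬ (G.induce {v}ᶜ).Preconnected) :
    ∃ u w, G.Adj u v ∧ G.Adj w v ∧
      ∀ I : Set V, (G.induce I).Connected → u ∈ I → w ∈ I → v ∈ I := by
  obtain ⟨x, y, hxy⟩ : ∃ x y, ¬ (G.induce {v}ᶜ).Reachable x y := by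
    simpa [Preconnected] using hv
  obtain ⟨u, huv, hxu⟩ := hG.exists_adj_reachable_induce_compl x
  obtain ⟨w, hwv, hyw⟩ := hG.exists_adj_reachable_induce_compl y
  refine ⟨u, w, huv, hwv, fun I hI huI hwI => by_contra fun hvI => hxy ?_⟩
  have hIv : I ⊆ {v}ᶜ := fun a haI hav => hvI (hav ▸ haI)
  exact hxu.trans ((hI.preconnected.reachable_induce_of_subset hIv huI hwI).trans hyw.symm)

end SimpleGraph

open SimpleGraph Finset

section Counting

variable {m : ℕ} {G : SimpleGraph (Fin m)}

lemma mem_graphBuildingSet {I : Finset (Fin m)} :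
    I ∈ graphBuildingSet G ↔ (G.induce (I : Set (Fin m))).Connected := by
  simp [graphBuildingSet]

lemma graphBuildingSet_singleton (v : Fin m) : {v} ∈ graphBuildingSet G := by
  rw [mem_graphBuildingSet, coe_singleton]
  exact ⟨Preconnected.of_subsingleton⟩

lemma insert_mem_graphBuildingSet {I : Finset (Fin m)} {u v : Fin m}
    (hI : I ∈ graphBuildingSet G) (hu : u ∈ I) (huv : G.Adj u v) :
    insert v I ∈ graphBuildingSet G := by
  rw [mem_graphBuildingSet, coe_insert, Set.insert_eq, Set.union_comm]
  exact connected_induce_union (mem_graphBuildingSet.mp hI).preconnected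
    Preconnected.of_subsingleton hu rfl huv

lemma kOf_eq_card_add_card (G : SimpleGraph (Fin m)) (u v : Fin m) :
    kOf G u = #{I ∈ graphBuildingSet G | u ∈ I ∧ v ∈ I} +
      #{I ∈ graphBuildingSet G | u ∈ I ∧ v ∉ I} := by
  rw [kOf, ← card_filter_add_card_filter_not (fun I => v ∈ I), filter_filter, filter_filter]

lemma card_mem_notMem_lt_card_mem_notMem {u v w : Fin m} (huv : G.Adj u v) (hwv : w ≠ v)
    (hsep : ∀ I ∈ graphBuildingSet G, u ∈ I → w ∈ I → v ∈ I) :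
    #{I ∈ graphBuildingSet G | u ∈ I ∧ v ∉ I} < #{I ∈ graphBuildingSet G | v ∈ I ∧ w ∉ I} := by
  set A := {I ∈ graphBuildingSet G | u ∈ I ∧ v ∉ I}
  set T := {I ∈ graphBuildingSet G | v ∈ I ∧ w ∉ I}
  have hmaps : Set.MapsTo (insert v) A (T.erase {v} : Set (Finset (Fin m))) := by
    intro I hI
    obtain ⟨hIG, huI, hvI⟩ := mem_filter.mp hI
    have hne : insert v I ≠ {v} := fun h =>
      huv.ne (mem_singleton.mp (h ▸ mem_insert_of_mem huI))
    have hwI : w ∉ insert v I := by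
      rw [mem_insert, not_or]
      exact ⟨hwv, fun hwI => hvI (hsep I hIG huI hwI)⟩
    exact mem_erase.mpr
      ⟨hne, mem_filter.mpr ⟨insert_mem_graphBuildingSet hIG huI huv, mem_insert_self v I, hwI⟩⟩
  have hinj : Set.InjOn (insert v) (A : Set (Finset (Fin m))) := by
    intro I hI J hJ hIJ
    rw [← erase_insert (mem_filter.mp hI).2.2, ← erase_insert (mem_filter.mp hJ).2.2]
    exact congrArg (erase · v) hIJ
  have hvT : {v} ∈ T := mem_filter.mpr
    ⟨graphBuildingSet_singleton v, mem_singleton_self v, by rwa [mem_singleton]⟩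
  exact (card_le_card_of_injOn _ hmaps hinj).trans_lt (card_erase_lt_of_mem hvT)

theorem kOf_add_kOf_lt_of_separated {u v w : Fin m} (huv : G.Adj u v) (hwv : G.Adj w v)
    (hsep : ∀ I ∈ graphBuildingSet G, u ∈ I → w ∈ I → v ∈ I) :
    kOf G u + kOf G w < 2 * kOf G v := by
  have hu := card_mem_notMem_lt_card_mem_notMem huv hwv.ne hsep
  have hw := card_mem_notMem_lt_card_mem_notMem hwv huv.ne fun I hI hwI huI => hsep I hI huI hwI
  have hboth : ∀ x, #{I ∈ graphBuildingSet G | v ∈ I ∧ x ∈ I} =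
      #{I ∈ graphBuildingSet G | x ∈ I ∧ v ∈ I} := by
    simp only [and_comm, implies_true]
  have hku := kOf_eq_card_add_card G u v
  have hkw := kOf_eq_card_add_card G w v
  have hkvu := kOf_eq_card_add_card G v u
  have hkvw := kOf_eq_card_add_card G v w
  rw [hboth] at hkvu hkvw
  omega

end Counting

/-- If `G` is a connected simple graph on `[n+1]`, `n ≥ 1`, and the
vertex `n+1` minimizes `k_i(G)`, then the induced subgraph on `[n]` is
connected. -/
theorem induced_on_complement_of_minimizer_connected {n : ℕ} (hn : 1 ≤ n)
    (G : SimpleGraph (Fin (n + 1))) (hG : G.Connected)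
    (hmin : ∀ i : Fin (n + 1), kOf G (Fin.last n) ≤ kOf G i) :
    (G.induce ({Fin.last n}ᶜ : Set (Fin (n + 1)))).Connected := by
  have hne : Nonempty ({Fin.last n}ᶜ : Set (Fin (n + 1))) :=
    ⟨⟨0, (Fin.pos_iff_ne_zero.mp hn).symm⟩⟩
  by_contra hcon
  obtain ⟨u, w, hu, hw, hsep⟩ :=
    hG.exists_adj_adj_separated fun hpre => hcon ((connected_iff _).mpr ⟨hpre, hne⟩)
  have hlt := kOf_add_kOf_lt_of_separated hu hw fun I hI =>
    hsep I (mem_graphBuildingSet.mp hI)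
  linarith [hmin u, hmin w]
end

section
/- Let G be a connected simple graph on vertex set [n+1] with n ≥ 1, and let B(G) = { I ⊆ [n+1] : I nonempty, G|_I connected }. Then for every vertex i ∈ [n+1], n · k_i(G) ≥ |B(G)| − 1, where k_i(G) is the number of connected induced subgraphs of G containing i. -/
open scoped Classical

/-!
Map a connected vertex set `I ≠ V` to the pair `(J, |I|)`, where `J` is `I` together with a
shortest path from `i` to a vertex of `I` nearest to `i`. The vertices of `J` outside `I` are
strictly closer to `i` than every vertex of `I`, so `I` is a superlevel set of `dist i` on `J`;
superlevel sets of one function are nested, so `I` is the only one of size `|I|`. This injects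
`B(G) \ {V}` into `{J ∈ B(G) : i ∈ J} × [1, |V| - 1]`.
-/

open Finset SimpleGraph

theorem Finset.filter_le_eq_of_card_eq {α β : Type*} [LinearOrder β] {s : Finset α}
    {f : α → β} {a b : β} (h : #(s.filter (a ≤ f ·)) = #(s.filter (b ≤ f ·))) :
    s.filter (a ≤ f ·) = s.filter (b ≤ f ·) := by
  rcases le_total a b with hab | hba
  · exact (eq_of_subset_of_card_le (monotone_filter_right s fun _ _ => hab.trans) h.le).symm
  · exact eq_of_subset_of_card_le (monotone_filter_right s fun _ _ => hba.trans) h.ge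

namespace SimpleGraph

variable {V : Type*} {G : SimpleGraph V}

theorem Walk.dist_lt_length_of_mem_support {u v w : V} {p : G.Walk u v} (hw : w ∈ p.support)
    (hwv : w ≠ v) : G.dist u w < p.length := by
  have hsplit : (p.takeUntil w hw).length + (p.dropUntil w hw).length = p.length := by
    rw [← Walk.length_append, Walk.take_spec]
  have hdrop : (p.dropUntil w hw).length ≠ 0 := fun h => hwv (Walk.eq_of_length_eq_zero h)
  have := dist_le (p.takeUntil w hw)
  omega

theorem Connected.exists_mem_induce_connected_filter_le_dist_eq [DecidableEq V]
    (hG : G.Connected) (i : V) {I : Finset V} (hI : (G.induce (I : Set V)).Connected) :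
    ∃ J : Finset V, i ∈ J ∧ (G.induce (J : Set V)).Connected ∧
      ∃ d, J.filter (d ≤ G.dist i ·) = I := by
  obtain ⟨⟨y, hy⟩⟩ := hI.nonempty
  obtain ⟨x, hxI, hx_min⟩ := I.exists_min_image (G.dist i) ⟨y, hy⟩
  obtain ⟨p, hp⟩ := hG.exists_walk_length_eq_dist i x
  refine ⟨I ∪ p.support.toFinset, mem_union_right _ (List.mem_toFinset.mpr p.start_mem_support), ?_, G.dist i x, ?_⟩
  · rw [coe_union, List.coe_toFinset]
    exact induce_union_connected hI.preconnected p.connected_induce_support.preconnected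
      ⟨x, hxI, p.end_mem_support⟩
  · ext y
    simp only [mem_filter, mem_union, List.mem_toFinset]
    constructor
    · rintro ⟨hyI | hyp, hdy⟩
      · exact hyI
      · by_contra hyI
        have := p.dist_lt_length_of_mem_support hyp (fun h => hyI (h ▸ hxI))
        omega
    · exact fun hyI => ⟨Or.inl hyI, hx_min y hyI⟩

theorem Connected.card_filter_induce_connected_sub_one_le [Fintype V] [DecidableEq V]
    (hG : G.Connected) (i : V) :
    #(univ.filter fun I : Finset V => (G.induce (I : Set V)).Connected) - 1 ≤
      (Fintype.card V - 1) *
        #((univ.filter fun I : Finset V => (G.induce (I : Set V)).Connected).filter (i ∈ ·)) := by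
  set B := univ.filter fun I : Finset V => (G.induce (I : Set V)).Connected
  have hB : ∀ {I}, I ∈ B ↔ (G.induce (I : Set V)).Connected := by simp [B]
  choose! J hiJ hJ d hJd using
    fun I (hI : I ∈ B) => hG.exists_mem_induce_connected_filter_le_dist_eq i (hB.mp hI)
  have hmaps : ∀ I ∈ B.erase univ,
      (J I, #I) ∈ B.filter (i ∈ ·) ×ˢ Icc 1 (Fintype.card V - 1) := by
    intro I hI
    obtain ⟨hI_ne, hIB⟩ := mem_erase.mp hI
    obtain ⟨⟨y, hy⟩⟩ := (hB.mp hIB).nonempty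
    have hlt := (card_lt_iff_ne_univ I).mpr hI_ne
    have hpos := card_pos.mpr ⟨y, hy⟩
    simp only [mem_product, mem_filter, mem_Icc]
    exact ⟨⟨hB.mpr (hJ I hIB), hiJ I hIB⟩, hpos, by omega⟩
  have hinj : Set.InjOn (fun I => (J I, #I)) (B.erase univ) := by
    intro I hI I' hI' h
    obtain ⟨hJ_eq, hcard⟩ := Prod.mk.inj h
    have hIB := mem_of_mem_erase hI
    have hI'B := mem_of_mem_erase hI'
    calc I = (J I').filter (d I ≤ G.dist i ·) := by rw [← hJ_eq, hJd I hIB]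
      _ = (J I').filter (d I' ≤ G.dist i ·) :=
        filter_le_eq_of_card_eq (by rw [hJd I' hI'B, ← hcard, ← hJ_eq, hJd I hIB])
      _ = I' := hJd I' hI'B
  have huniv : univ ∈ B := hB.mpr (by rw [coe_univ]; exact G.induceUnivIso.connected_iff.mpr hG)
  calc #B - 1 = #(B.erase univ) := (card_erase_of_mem huniv).symm
    _ ≤ #(B.filter (i ∈ ·) ×ˢ Icc 1 (Fintype.card V - 1)) := card_le_card_of_injOn _ hmaps hinj
    _ = (Fintype.card V - 1) * #(B.filter (i ∈ ·)) := by simp [mul_comm]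

end SimpleGraph

theorem n_mul_k_ge_card_building_set_sub_one_general {n : ℕ}
    (G : SimpleGraph (Fin (n + 1))) (hG : G.Connected) (i : Fin (n + 1)) :
    (graphBuildingSet G).card - 1 ≤ n * kOf G i := by
  have := hG.card_filter_induce_connected_sub_one_le i
  rwa [Fintype.card_fin, Nat.add_sub_cancel] at this

/-- For a connected simple graph `G` on `[n+1]` with `n ≥ 1` and
every vertex `i`, we have `n · k_i(G) ≥ |B(G)| − 1`. -/
theorem n_mul_k_ge_card_building_set_sub_one {n : ℕ} (hn : 1 ≤ n)
    (G : SimpleGraph (Fin (n + 1))) (hG : G.Connected) (i : Fin (n + 1)) :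
    (graphBuildingSet G).card - 1 ≤ n * kOf G i :=
  n_mul_k_ge_card_building_set_sub_one_general G hG i
end

section
/- Let G be a connected simple graph on [n+1] with n ≥ 2 and B = B(G). Suppose k_{n+1}(G) ≤ k_i(G) for all i. Then for every I ∈ B with |I| ≥ 2 and I ≠ [n+1], the inequality (|B| − k_{n+1}(G) − 1)/(n − 1) ≥ (|B|_I| − 1)/(|I| − 1) holds. -/
/-!
Write `F(K)` for the number of connected subsets of `K`. For connected `K` and `x ∈ K`,
`F(K) ≤ (|K| - 1) · F_x(K) + 1`, where `F_x(K)` counts those containing `x`: delete a vertex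
`y ≠ x` keeping `K` connected, and inject the connected sets containing `y` but not `x` into
pairs (connected set containing `x` and `y`, size) by adjoining a shortest path from `x`.
Peeling off such non-cut vertices outside `I` one at a time, this bound shows that the slope
`(F(K) - 1) / (|K| - 1)` does not decrease along connected sets `I ⊆ K`. Take
`K = [n+1] \ {u}` for a non-cut vertex `u ∉ I`; then `F(K) = |B| - k_u ≤ |B| - k_{n+1}`.
-/

open scoped Classical

/-- The restricted building set `B|_I = {K ∈ B : K ⊆ I}`. -/
noncomputable def restrictedBS {m : ℕ} (G : SimpleGraph (Fin m))
    (I : Finset (Fin m)) : Finset (Finset (Fin m)) :=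
  (graphBuildingSet G).filter fun K => K ⊆ I

open Finset

namespace SimpleGraph

variable {V : Type*} {G : SimpleGraph V}

variable (G) in
/-- `G[s]` spread over all of `V`, so that its walks and distances live in `V`. -/
def restrict (s : Set V) : SimpleGraph V where
  Adj a b := G.Adj a b ∧ a ∈ s ∧ b ∈ s
  symm := ⟨fun _ _ h => ⟨h.1.symm, h.2.2, h.2.1⟩⟩
  loopless := ⟨fun _ h => G.irrefl h.1⟩

lemma restrict_le (s : Set V) : G.restrict s ≤ G := fun _ _ h => h.1

lemma Walk.mem_of_mem_support_restrict {s : Set V} {a b v : V} (p : (G.restrict s).Walk a b)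
    (hb : b ∈ s) (hv : v ∈ p.support) : v ∈ s := by
  induction p with
  | nil => simp_all
  | cons h q ih =>
    rw [support_cons, List.mem_cons] at hv
    rcases hv with rfl | hv
    exacts [h.2.1, ih hb hv]

lemma Connected.reachable_restrict {s : Set V} (h : (G.induce s).Connected) {a b : V}
    (ha : a ∈ s) (hb : b ∈ s) : (G.restrict s).Reachable a b :=
  (h.preconnected ⟨a, ha⟩ ⟨b, hb⟩).map
    (⟨Subtype.val, fun {x y} hxy => ⟨hxy, x.2, y.2⟩⟩ : G.induce s →g G.restrict s)

lemma Walk.dist_lt_length {x v w : V} (p : G.Walk x w) (hv : v ∈ p.support) (hvw : v ≠ w) :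
    G.dist x v < p.length :=
  (dist_le _).trans_lt (length_takeUntil_lt_length hv hvw)

variable (G) in
lemma connected_induce_singleton (x : V) : (G.induce ↑({x} : Finset V)).Connected := by
  rw [coe_singleton, induce_singleton_eq_top]
  exact connected_top

section Finset

variable [DecidableEq V]

theorem exists_connected_induce_erase {K I : Finset V} (hK : (G.induce ↑K).Connected)
    (hI : (G.induce ↑I).Connected) (hIK : I ⊂ K) :
    ∃ u ∈ K, u ∉ I ∧ (G.induce ↑(K.erase u)).Connected := by
  obtain ⟨r, hr⟩ : I.Nonempty := coe_nonempty.mp (Set.nonempty_coe_sort.mp hI.nonempty)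
  obtain ⟨u, hu, hmax⟩ := exists_max_image (K \ I) ((G.restrict K).dist r)
    (sdiff_nonempty.mpr (not_subset_of_ssubset hIK))
  rw [mem_sdiff] at hu
  have hIu : (I : Set V) ⊆ ↑(K.erase u) := by
    rw [coe_subset, subset_erase]
    exact ⟨hIK.subset, hu.2⟩
  refine ⟨u, hu.1, hu.2, induce_connected_of_patches r (hIu hr) fun {w} hw => ?_⟩
  by_cases hwI : w ∈ I
  · exact ⟨I, hIu, hr, hwI, hI.preconnected _ _⟩
  rw [coe_erase, Set.mem_sdiff, Set.mem_singleton_iff] at hw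
  obtain ⟨p, -, hp⟩ := (hK.reachable_restrict (hIK.subset hr) hw.1).exists_path_of_dist
  -- `u` is at least as far from `r` as `w`, so it cannot lie on a shortest path from `r` to `w`
  have hup : u ∉ p.support := fun hup =>
    (hmax w (mem_sdiff.mpr ⟨hw.1, hwI⟩)).not_gt (hp ▸ p.dist_lt_length hup (Ne.symm hw.2))
  set q := p.mapLe (restrict_le _)
  refine ⟨{v | v ∈ q.support}, fun v hv => ?_, q.start_mem_support, q.end_mem_support,
    q.connected_induce_support.preconnected _ _⟩
  rw [Set.mem_ofPred_eq, Walk.support_mapLe_eq_support] at hv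
  rw [coe_erase, Set.mem_sdiff, Set.mem_singleton_iff]
  exact ⟨p.mem_of_mem_support_restrict hw.1 hv, fun h => hup (h ▸ hv)⟩

theorem exists_connected_superset_eq_filter_dist {K S : Finset V} {x : V}
    (hK : (G.induce ↑K).Connected) (hx : x ∈ K) (hS : (G.induce ↑S).Connected) (hSK : S ⊆ K) :
    ∃ T : Finset V, S ⊆ T ∧ T ⊆ K ∧ x ∈ T ∧ (G.induce ↑T).Connected ∧
      S = {v ∈ T | #T - #S ≤ (G.restrict K).dist x v} := by
  obtain ⟨s, hs, hmin⟩ := exists_min_image S ((G.restrict K).dist x)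
    (coe_nonempty.mp (Set.nonempty_coe_sort.mp hS.nonempty))
  obtain ⟨p, hp, hlen⟩ := (hK.reachable_restrict hx (hSK hs)).exists_path_of_dist
  rw [← hlen] at hmin
  have hpS : ∀ v ∈ p.support, v ≠ s → v ∉ S := fun v hv hvs hvS =>
    (hmin v hvS).not_gt (p.dist_lt_length hv hvs)
  have hinter : S ∩ p.support.toFinset = {s} := by
    ext v
    simp only [mem_inter, List.mem_toFinset, mem_singleton]
    refine ⟨fun h => by_contra fun hvs => hpS v h.2 hvs h.1, ?_⟩
    rintro rfl
    exact ⟨hs, p.end_mem_support⟩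
  set T := S ∪ p.support.toFinset
  have hcard : #T = #S + p.length := by
    show #(S ∪ p.support.toFinset) = _
    have := card_union_add_card_inter S p.support.toFinset
    rw [hinter, card_singleton, List.toFinset_card_of_nodup hp.support_nodup,
      Walk.length_support] at this
    omega
  refine ⟨T, subset_union_left, union_subset hSK fun v hv => ?_, ?_, ?_, ?_⟩
  · exact p.mem_of_mem_support_restrict (hSK hs) (List.mem_toFinset.mp hv)
  · exact mem_union_right _ (List.mem_toFinset.mpr p.start_mem_support)
  · set q := p.mapLe (restrict_le _)
    have hT : (T : Set V) = ↑S ∪ {v | v ∈ q.support} := by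
      ext v
      simp [T, q]
    rw [hT]
    refine induce_union_connected hS.preconnected q.connected_induce_support.preconnected
      ⟨s, hs, q.end_mem_support⟩
  · ext v
    rw [mem_filter, hcard, Nat.add_sub_cancel_left]
    refine ⟨fun hv => ⟨subset_union_left hv, hmin v hv⟩, fun ⟨hvT, hv⟩ => ?_⟩
    rcases mem_union.mp hvT with hvS | hvp
    · exact hvS
    by_cases hvs : v = s
    · exact hvs ▸ hs
    exact absurd hv (not_le.mpr (p.dist_lt_length (List.mem_toFinset.mp hvp) hvs))

variable (G) in
noncomputable def connectedSubsets (K : Finset V) : Finset (Finset V) :=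
  {S ∈ K.powerset | (G.induce (S : Set V)).Connected}

lemma mem_connectedSubsets {K S : Finset V} :
    S ∈ G.connectedSubsets K ↔ S ⊆ K ∧ (G.induce ↑S).Connected := by
  simp [connectedSubsets]

variable (G) in
lemma connectedSubsets_erase (K : Finset V) (u : V) :
    G.connectedSubsets (K.erase u) = {S ∈ G.connectedSubsets K | u ∉ S} := by
  ext S
  simp only [mem_filter, mem_connectedSubsets, subset_erase]
  tauto

variable (G) in
lemma card_connectedSubsets_erase_add (K : Finset V) (u : V) :
    #(G.connectedSubsets (K.erase u)) + #{S ∈ G.connectedSubsets K | u ∈ S} =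
      #(G.connectedSubsets K) := by
  rw [G.connectedSubsets_erase, add_comm]
  exact card_filter_add_card_filter_not _

variable (G) in
lemma connectedSubsets_singleton (x : V) : G.connectedSubsets {x} = {{x}} := by
  ext S
  rw [mem_connectedSubsets, mem_singleton, subset_singleton_iff]
  constructor
  · rintro ⟨rfl | rfl, hS⟩
    · simpa using hS.nonempty
    · rfl
  · rintro rfl
    exact ⟨Or.inr rfl, G.connected_induce_singleton x⟩

theorem card_connectedSubsets_mem_not_mem_le {K : Finset V} (hK : (G.induce ↑K).Connected)
    {x y : V} (hx : x ∈ K) :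
    #{S ∈ G.connectedSubsets K | y ∈ S ∧ x ∉ S} ≤
      (#K - 2) * #{S ∈ G.connectedSubsets K | x ∈ S ∧ y ∈ S} + 1 := by
  set A := {S ∈ G.connectedSubsets K | y ∈ S ∧ x ∉ S}
  set D := {S ∈ G.connectedSubsets K | x ∈ S ∧ y ∈ S}
  have hext : ∀ S ∈ A, ∃ T ∈ D, S = {v ∈ T | #T - #S ≤ (G.restrict K).dist x v} := by
    intro S hS
    simp only [A, mem_filter, mem_connectedSubsets] at hS
    obtain ⟨T, hST, hTK, hxT, hT, hST_eq⟩ :=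
      exists_connected_superset_eq_filter_dist hK hx hS.1.2 hS.1.1
    exact ⟨T, mem_filter.mpr ⟨mem_connectedSubsets.mpr ⟨hTK, hT⟩, hxT, hST hS.2.1⟩, hST_eq⟩
  choose! extend hextD hext_eq using hext
  -- `K.erase x` is the only member of `A` of size `#K - 1`
  have hinj : #(A.erase (K.erase x)) ≤ #(D ×ˢ Icc 1 (#K - 2)) := by
    refine card_le_card_of_injOn (fun S => (extend S, #S)) (fun S hS => ?_) ?_
    · obtain ⟨hne, hSA⟩ := mem_erase.mp hS
      have hSA' := hSA
      simp only [A, mem_filter, mem_connectedSubsets] at hSA'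
      have hSx : S ⊂ K.erase x := (subset_erase.mpr ⟨hSA'.1.1, hSA'.2.2⟩).ssubset_of_ne hne
      have := card_lt_card hSx
      rw [card_erase_of_mem hx] at this
      have := card_pos.mpr ⟨y, hSA'.2.1⟩
      simp only [coe_product, Set.mem_prod, mem_coe, mem_Icc]
      exact ⟨hextD S hSA, by omega, by omega⟩
    · intro S₁ hS₁ S₂ hS₂ h
      simp only [Prod.mk.injEq] at h
      rw [hext_eq S₁ (mem_of_mem_erase hS₁), hext_eq S₂ (mem_of_mem_erase hS₂), h.1, h.2]
  rw [card_product, Nat.card_Icc, Nat.add_sub_cancel] at hinj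
  have := pred_card_le_card_erase (s := A) (a := K.erase x)
  rw [mul_comm]
  omega

theorem card_connectedSubsets_le {K : Finset V} (hK : (G.induce ↑K).Connected) {x : V}
    (hx : x ∈ K) :
    #(G.connectedSubsets K) ≤ (#K - 1) * #{S ∈ G.connectedSubsets K | x ∈ S} + 1 := by
  induction K using Finset.strongInduction generalizing x with
  | H K ih =>
  rcases eq_or_ne K {x} with rfl | hKx
  · simp [G.connectedSubsets_singleton]
  obtain ⟨y, hyK, hyx, hKy⟩ := exists_connected_induce_erase hK (G.connected_induce_singleton x)
    ((singleton_subset_iff.mpr hx).ssubset_of_ne hKx.symm)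
  have hxy : x ≠ y := fun h => hyx (h ▸ mem_singleton_self x)
  have IH := ih _ (erase_ssubset hyK) hKy (mem_erase.mpr ⟨hxy, hx⟩)
  have hK2 : 2 ≤ #K := one_lt_card.mpr ⟨x, hx, y, hyK, hxy⟩
  have ha : 1 ≤ #{S ∈ G.connectedSubsets (K.erase y) | x ∈ S} :=
    card_pos.mpr ⟨{x}, mem_filter.mpr ⟨mem_connectedSubsets.mpr
      ⟨singleton_subset_iff.mpr (mem_erase.mpr ⟨hxy, hx⟩), G.connected_induce_singleton x⟩,
      mem_singleton_self x⟩⟩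
  have hC := card_connectedSubsets_mem_not_mem_le hK hx (y := y)
  have hsplit := G.card_connectedSubsets_erase_add K y
  have hsplit_y : #{S ∈ G.connectedSubsets K | y ∈ S} =
      #{S ∈ G.connectedSubsets K | x ∈ S ∧ y ∈ S} +
        #{S ∈ G.connectedSubsets K | y ∈ S ∧ x ∉ S} := by
    rw [← card_filter_add_card_filter_not (s := {S ∈ G.connectedSubsets K | y ∈ S}) (x ∈ ·),
      filter_filter, filter_filter]
    congr 2
    exact filter_congr fun _ _ => and_comm
  have hsplit_x : #{S ∈ G.connectedSubsets (K.erase y) | x ∈ S} +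
      #{S ∈ G.connectedSubsets K | x ∈ S ∧ y ∈ S} = #{S ∈ G.connectedSubsets K | x ∈ S} := by
    rw [← card_filter_add_card_filter_not (s := {S ∈ G.connectedSubsets K | x ∈ S}) (y ∈ ·),
      filter_filter, filter_filter, G.connectedSubsets_erase, filter_filter, add_comm]
    congr 2
    exact filter_congr fun _ _ => and_comm
  rw [card_erase_of_mem hyK] at IH
  obtain ⟨M, hM⟩ : ∃ M, #K = M + 2 := ⟨#K - 2, by omega⟩
  rw [hM] at IH hC ⊢
  simp only [show M + 2 - 1 = M + 1 from rfl, show M + 1 - 1 = M from rfl,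
    Nat.add_sub_cancel] at IH hC ⊢
  nlinarith

theorem card_connectedSubsets_slope_le {I K : Finset V} (hI : (G.induce ↑I).Connected)
    (hI2 : 2 ≤ #I) (hK : (G.induce ↑K).Connected) (hIK : I ⊆ K) :
    ((#K : ℚ) - 1) * (#(G.connectedSubsets I) - 1) ≤
      ((#I : ℚ) - 1) * (#(G.connectedSubsets K) - 1) := by
  induction K using Finset.strongInduction with
  | H K ih =>
  rcases hIK.eq_or_ssubset with rfl | hIK
  · rfl
  obtain ⟨u, huK, huI, hKu⟩ := exists_connected_induce_erase hK hI hIK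
  have IH := ih _ (erase_ssubset huK) hKu (subset_erase.mpr ⟨hIK.subset, huI⟩)
  have hsplit := G.card_connectedSubsets_erase_add K u
  have hbound := card_connectedSubsets_le hK huK
  have hIK' : #I < #K := card_lt_card hIK
  rw [card_erase_of_mem huK] at IH
  set c := #{S ∈ G.connectedSubsets K | u ∈ S}
  have hK1 : 1 ≤ #K := by omega
  push_cast [hK1] at IH
  have hbound' : (#(G.connectedSubsets K) : ℚ) ≤ (#K - 1) * c + 1 := by
    exact_mod_cast hbound
  have hsplit' : (#(G.connectedSubsets K) : ℚ) = #(G.connectedSubsets (K.erase u)) + c := by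
    exact_mod_cast hsplit.symm
  have hIK'' : (#I : ℚ) + 1 ≤ #K := by exact_mod_cast hIK'
  have hI2' : (2 : ℚ) ≤ #I := by exact_mod_cast hI2
  -- divide the inductive hypothesis by `#K - 2 > 0`
  have key : (#(G.connectedSubsets I) : ℚ) - 1 ≤ (#I - 1) * c := by
    refine le_of_mul_le_mul_left ?_ (by linarith : (0 : ℚ) < #K - 2)
    calc ((#K : ℚ) - 2) * (#(G.connectedSubsets I) - 1)
        ≤ (#I - 1) * (#(G.connectedSubsets (K.erase u)) - 1) := by linarith
      _ ≤ (#I - 1) * ((#K - 2) * c) := by gcongr <;> linarith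
      _ = (#K - 2) * ((#I - 1) * c) := by ring
  linear_combination IH + key - (#I - 1 : ℚ) * hsplit'

end Finset

end SimpleGraph

lemma graphBuildingSet_eq_connectedSubsets {m : ℕ} (G : SimpleGraph (Fin m)) :
    graphBuildingSet G = G.connectedSubsets univ := by
  ext S
  simp [graphBuildingSet, SimpleGraph.mem_connectedSubsets]

lemma restrictedBS_eq_connectedSubsets {m : ℕ} (G : SimpleGraph (Fin m)) (I : Finset (Fin m)) :
    restrictedBS G I = G.connectedSubsets I := by
  ext S
  simp [restrictedBS, graphBuildingSet, SimpleGraph.mem_connectedSubsets, and_comm]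

lemma card_graphBuildingSet_eq {m : ℕ} (G : SimpleGraph (Fin m)) (u : Fin m) :
    #(graphBuildingSet G) = #(G.connectedSubsets (univ.erase u)) + kOf G u := by
  rw [kOf, graphBuildingSet_eq_connectedSubsets, G.card_connectedSubsets_erase_add]

/-- Let `G` be a connected simple graph on `[n+1]`, `n ≥ 2`, with
`k_{n+1}` minimal. For every `I ∈ B(G)` with `|I| ≥ 2` and `I ≠ [n+1]`,
`(|B| − k_{n+1} − 1)/(n − 1) ≥ (|B|_I| − 1)/(|I| − 1)`. -/
theorem slope_inequality {n : ℕ} (hn : 2 ≤ n) (G : SimpleGraph (Fin (n + 1)))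
    (hG : G.Connected)
    (hmin : ∀ i : Fin (n + 1), kOf G (Fin.last n) ≤ kOf G i)
    (I : Finset (Fin (n + 1))) (hI : I ∈ graphBuildingSet G)
    (hIcard : 2 ≤ I.card) (hIproper : I ≠ Finset.univ) :
    ((restrictedBS G I).card - 1 : ℚ) / ((I.card - 1 : ℕ) : ℚ) ≤
      ((graphBuildingSet G).card - (kOf G (Fin.last n)) - 1 : ℚ) / ((n - 1 : ℕ) : ℚ) := by
  have hIconn : (G.induce ↑I).Connected := (mem_filter.mp hI).2
  have huniv : (G.induce ↑(univ : Finset (Fin (n + 1)))).Connected := by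
    rw [coe_univ]
    exact (SimpleGraph.induceUnivIso G).connected_iff.mpr hG
  obtain ⟨u, -, huI, hconn⟩ :=
    SimpleGraph.exists_connected_induce_erase huniv hIconn (ssubset_univ_iff.mpr hIproper)
  have hslope := SimpleGraph.card_connectedSubsets_slope_le hIconn hIcard hconn
    (subset_erase.mpr ⟨subset_univ I, huI⟩)
  rw [card_erase_of_mem (mem_univ u), card_univ, Fintype.card_fin, Nat.add_sub_cancel,
    ← restrictedBS_eq_connectedSubsets] at hslope
  have hsplit := card_graphBuildingSet_eq G u
  have hk : (kOf G (Fin.last n) : ℚ) ≤ kOf G u := by exact_mod_cast hmin u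
  rw [div_le_div_iff₀ (Nat.cast_pos.mpr (by omega)) (Nat.cast_pos.mpr (by omega)),
    Nat.cast_sub (by omega), Nat.cast_sub (by omega), hsplit]
  push_cast
  have hI1 : (0 : ℚ) ≤ #I - 1 := by
    rw [sub_nonneg, Nat.one_le_cast]
    omega
  nlinarith [mul_le_mul_of_nonneg_left hk hI1]
end

section
/- Let B be a building set on [n+1] with [n+1] ∈ B, and let G be such that B = B(G) for a connected simple graph G (or more generally let B be graphical). Then for every I ∈ B with I ≠ [n+1], there exists J ∈ B with I ⊆ J and [n+1] \ J a singleton. -/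
open scoped Classical

/-!
Among the proper vertex sets that contain `I` and induce a connected subgraph, take a maximal
one `J`. Since `G` is connected, some edge leaves `J`, and adding its outer endpoint keeps the
induced subgraph connected; by maximality the enlarged set is everything, so `J` misses exactly
one vertex.
-/

namespace SimpleGraph

variable {V : Type*} {G : SimpleGraph V}

lemma Connected.exists_connected_induce_insert (hG : G.Connected) {s : Set V}
    (hs : (G.induce s).Connected) (hne : s ≠ Set.univ) :
    ∃ v ∉ s, (G.induce (insert v s)).Connected := by
  obtain ⟨a, ha⟩ := hs.nonempty
  obtain ⟨b, hb⟩ := (Set.ne_univ_iff_exists_notMem s).mp hne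
  obtain ⟨d, -, hd₁, hd₂⟩ := (hG.preconnected a b).some.exists_boundary_dart s ha hb
  refine ⟨d.snd, hd₂, ?_⟩
  rw [← Set.union_singleton]
  refine connected_induce_union hs.preconnected ?_ hd₁ rfl d.adj
  rw [induce_singleton_eq_top]
  exact preconnected_top

lemma Connected.exists_notMem_connected_induce_compl_singleton [Finite V] (hG : G.Connected)
    {s : Set V} (hs : (G.induce s).Connected) (hne : s ≠ Set.univ) :
    ∃ v ∉ s, (G.induce {v}ᶜ).Connected := by
  obtain ⟨t, hst, ⟨htne, htconn⟩, htmax⟩ :=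
    Finite.exists_le_maximal (p := fun t : Set V => t ≠ Set.univ ∧ (G.induce t).Connected)
      ⟨hne, hs⟩
  obtain ⟨v, hvt, hvconn⟩ := hG.exists_connected_induce_insert htconn htne
  have hinsert : insert v t = Set.univ := by
    by_contra hne'
    exact hvt (htmax ⟨hne', hvconn⟩ (Set.subset_insert v t) (Set.mem_insert v t))
  have ht : t = {v}ᶜ := by
    ext x
    refine ⟨fun hx hxv => hvt (hxv ▸ hx), fun hxv => ?_⟩
    exact (Set.mem_insert_iff.mp (hinsert ▸ Set.mem_univ x)).resolve_left hxv
  exact ⟨v, fun hvs => hvt (hst hvs), ht ▸ htconn⟩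

end SimpleGraph

/-- Let `G` be a connected simple graph on `[n+1]` and
`B = B(G)`. For every `I ∈ B` with `I ≠ [n+1]` there is `J ∈ B` with `I ⊆ J`
and `[n+1] \ J` a singleton. -/
theorem exists_coatom_above {n : ℕ} (G : SimpleGraph (Fin (n + 1)))
    (hG : G.Connected) (I : Finset (Fin (n + 1)))
    (hI : I ∈ graphBuildingSet G) (hproper : I ≠ Finset.univ) :
    ∃ J ∈ graphBuildingSet G, I ⊆ J ∧ ∃ j : Fin (n + 1),
      J = Finset.univ.erase j := by
  have hIconn : (G.induce (I : Set (Fin (n + 1)))).Connected := (Finset.mem_filter.mp hI).2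
  obtain ⟨j, hjI, hj⟩ := hG.exists_notMem_connected_induce_compl_singleton hIconn
    (by rwa [← Finset.coe_univ, Ne, Finset.coe_inj])
  refine ⟨Finset.univ.erase j, Finset.mem_filter.mpr ⟨Finset.mem_univ _, ?_⟩,
    fun x hx => Finset.mem_erase.mpr ⟨fun hxj => hjI (hxj ▸ hx), Finset.mem_univ x⟩, j, rfl⟩
  rwa [← Finset.compl_singleton, Finset.coe_compl, Finset.coe_singleton]
end

section
/- Let G be a connected simple graph on [n+1] with n ≥ 2, such that vertex 1 is adjacent to vertex n+1, and the induced subgraph G|_{[n]} is disconnected with vertex 1 in one component and vertex 2 in another component, where 2 is adjacent to n+1. For each i let m_i be the number of connected induced subgraphs of G containing i but not n+1, and ℓ_i the number of those containing both i and n+1. Then the number k_{n+1}(G) of connected induced subgraphs of G containing n+1 is at least ℓ_1 + m_2 + 1. -/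
open scoped Classical

/-- `ℓ_i`: connected induced subgraphs containing both `i` and the last vertex. -/
noncomputable def ellOf {n : ℕ} (G : SimpleGraph (Fin (n + 1))) (i : Fin (n + 1)) : ℕ :=
  ((graphBuildingSet G).filter fun I => i ∈ I ∧ Fin.last n ∈ I).card

/-- `m_i`: connected induced subgraphs containing `i` but not the last vertex. -/
noncomputable def emOf {n : ℕ} (G : SimpleGraph (Fin (n + 1))) (i : Fin (n + 1)) : ℕ :=
  ((graphBuildingSet G).filter fun I => i ∈ I ∧ Fin.last n ∉ I).card

lemma singleton_connected {m : ℕ} (G : SimpleGraph (Fin m)) (v : Fin m) :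
    (G.induce ({v} : Set (Fin m))).Connected := by
  rw [SimpleGraph.connected_iff]
  refine ⟨fun a b => ?_, ⟨⟨v, rfl⟩⟩⟩
  have : a = b := Subtype.ext (by
    have ha := a.2; have hb := b.2
    simp only [Set.mem_singleton_iff] at ha hb
    rw [ha, hb])
  exact this ▸ SimpleGraph.Reachable.refl a

/-- key counting step: Let `G` be connected on `[n+1]`, and let
`v₁ ≠ v₂` be two vertices, distinct from `n+1`, both adjacent to `n+1`, lying in
different connected components of `G|_{[n]}` (no connected induced subgraph
avoiding `n+1` contains both). Then the number of connected induced subgraphs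
containing `n+1` is at least `ℓ_{v₁} + m_{v₂} + 1`. -/
theorem counting_step {n : ℕ} (G : SimpleGraph (Fin (n + 1))) (hG : G.Connected)
    (v₁ v₂ : Fin (n + 1)) (hne : v₁ ≠ v₂)
    (h₁ : v₁ ≠ Fin.last n) (h₂ : v₂ ≠ Fin.last n)
    (hadj₁ : G.Adj v₁ (Fin.last n)) (hadj₂ : G.Adj v₂ (Fin.last n))
    (hcomp : ∀ I ∈ graphBuildingSet G, Fin.last n ∉ I → ¬(v₁ ∈ I ∧ v₂ ∈ I)) :
    ellOf G v₁ + emOf G v₂ + 1 ≤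
      ((graphBuildingSet G).filter fun I => Fin.last n ∈ I).card := by
  classical
  set F := (graphBuildingSet G).filter fun I => Fin.last n ∈ I with hF
  set A := (graphBuildingSet G).filter fun I => v₁ ∈ I ∧ Fin.last n ∈ I with hA
  set B := ((graphBuildingSet G).filter fun I => v₂ ∈ I ∧ Fin.last n ∉ I).image
      (insert (Fin.last n)) with hB
  set C : Finset (Finset (Fin (n + 1))) := {{Fin.last n}} with hC
  -- cardinalities
  have cardA : A.card = ellOf G v₁ := rfl
  have cardB : B.card = emOf G v₂ := by
    rw [hB, Finset.card_image_of_injOn, emOf]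
    intro S hS T hT hST
    simp only [Finset.mem_coe, Finset.mem_filter] at hS hT
    have : ∀ x, x ∈ S ↔ x ∈ T := by
      intro x
      by_cases hx : x = Fin.last n
      · subst hx; exact iff_of_false hS.2.2 hT.2.2
      · constructor
        · intro h
          have : x ∈ insert (Fin.last n) T := hST ▸ Finset.mem_insert_of_mem h
          rcases Finset.mem_insert.mp this with h' | h'
          · exact absurd h' hx
          · exact h'
        · intro h
          have : x ∈ insert (Fin.last n) S := hST.symm ▸ Finset.mem_insert_of_mem h
          rcases Finset.mem_insert.mp this with h' | h'
          · exact absurd h' hx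
          · exact h'
    exact Finset.ext this
  -- memberships
  have hBmem : ∀ I ∈ B, I ∈ F ∧ v₂ ∈ I ∧ v₁ ∉ I := by
    intro I hI
    rw [hB] at hI
    obtain ⟨S, hS, rfl⟩ := Finset.mem_image.mp hI
    simp only [Finset.mem_filter] at hS
    obtain ⟨hSb, hv₂S, hlS⟩ := hS
    have hconn : (G.induce ((insert (Fin.last n) S : Finset (Fin (n+1))) : Set (Fin (n+1)))).Connected := by
      have hcoe : ((insert (Fin.last n) S : Finset (Fin (n+1))) : Set (Fin (n+1)))
          = ({Fin.last n} : Set (Fin (n+1))) ∪ (S : Set (Fin (n+1))) := by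
        rw [Finset.coe_insert, Set.insert_eq]
      rw [hcoe]
      have hSconn : (G.induce (S : Set (Fin (n+1)))).Connected := by
        have := (Finset.mem_filter.mp hSb).2
        exact this
      exact SimpleGraph.connected_induce_union (singleton_connected G _).preconnected hSconn.preconnected
        rfl hv₂S hadj₂.symm
    have hmemB : insert (Fin.last n) S ∈ graphBuildingSet G := by
      simp [graphBuildingSet, hconn]
    refine ⟨Finset.mem_filter.mpr ⟨hmemB, Finset.mem_insert_self _ _⟩,
      Finset.mem_insert_of_mem hv₂S, ?_⟩
    intro hv₁
    rcases Finset.mem_insert.mp hv₁ with h | h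
    · exact h₁ h
    · exact hcomp S hSb hlS ⟨h, hv₂S⟩
  have hsubA : A ⊆ F := by
    intro I hI
    simp only [hA, hF, Finset.mem_filter] at hI ⊢
    exact ⟨hI.1, hI.2.2⟩
  have hsubB : B ⊆ F := fun I hI => (hBmem I hI).1
  have hsubC : C ⊆ F := by
    intro I hI
    rw [hC, Finset.mem_singleton] at hI
    subst hI
    refine Finset.mem_filter.mpr ⟨?_, Finset.mem_singleton_self _⟩
    have : (({Fin.last n} : Finset (Fin (n+1))) : Set (Fin (n+1))) = {Fin.last n} := by simp
    simp only [graphBuildingSet, Finset.mem_filter, Finset.mem_univ, true_and]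
    rw [this]
    exact singleton_connected G _
  -- disjointness
  have hdAB : Disjoint A B := by
    rw [Finset.disjoint_left]
    intro I hIA hIB
    have := (hBmem I hIB).2.2
    exact this (Finset.mem_filter.mp hIA).2.1
  have hdAC : Disjoint A C := by
    rw [Finset.disjoint_left]
    intro I hIA hIC
    rw [hC, Finset.mem_singleton] at hIC
    subst hIC
    have := (Finset.mem_filter.mp hIA).2.1
    exact h₁ (Finset.mem_singleton.mp this)
  have hdBC : Disjoint B C := by
    rw [Finset.disjoint_left]
    intro I hIB hIC
    rw [hC, Finset.mem_singleton] at hIC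
    subst hIC
    have := (hBmem _ hIB).2.1
    exact h₂ (Finset.mem_singleton.mp this)
  have hunion : A ∪ B ∪ C ⊆ F := by
    intro I hI
    rcases Finset.mem_union.mp hI with h | h
    · rcases Finset.mem_union.mp h with h | h
      · exact hsubA h
      · exact hsubB h
    · exact hsubC h
  have hcard : (A ∪ B ∪ C).card = A.card + B.card + C.card := by
    rw [Finset.card_union_of_disjoint, Finset.card_union_of_disjoint hdAB]
    exact Finset.disjoint_union_left.mpr ⟨hdAC, hdBC⟩
  calc ellOf G v₁ + emOf G v₂ + 1 = A.card + B.card + C.card := by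
        rw [cardA, cardB]; rfl
    _ = (A ∪ B ∪ C).card := hcard.symm
    _ ≤ F.card := Finset.card_le_card hunion
end
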